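/- arXiv:2205.08895 — 2 statements merged into one kernel-verified Lean document; each statement's English description precedes it below -/
import Mathlib

section
/- Let A be a commutative ring in which p is a nonzerodivisor, and let φ : A → A be a ring automorphism fixing p. Suppose t, x, y ∈ A satisfy φ(t) = t^p, x ≡ t (mod pA), and φ(x) = x^p·(1 + p·y). Then for every n ≥ 0, x ≡ t·∏_{i=1}^{n}(1 + p·φ^{−i}(y))^{p^{i−1}} (mod p^{n+1}A). -/
private lemma key_dvd {A : Type*} [CommRing A] (p m : ℕ) (hp : p.Prime) (hm : 1 ≤ m)
    (a b : A) (h : (p : A) ^ m ∣ a - b) : (p : A) ^ (m + 1) ∣ a ^ p - b ^ p := by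
  obtain ⟨c, hc⟩ := h
  have ha : a = b + (p : A) ^ m * c := by linear_combination hc
  subst ha
  rw [add_pow, Finset.sum_range_succ]
  simp only [Nat.sub_self, pow_zero, Nat.choose_self, Nat.cast_one, mul_one]
  have heq : (∑ k ∈ Finset.range p, b ^ k * ((p : A) ^ m * c) ^ (p - k) * (p.choose k : A))
      + b ^ p - b ^ p
      = ∑ k ∈ Finset.range p, b ^ k * ((p : A) ^ m * c) ^ (p - k) * (p.choose k : A) := by ring
  rw [heq]
  apply Finset.dvd_sum
  intro k hk
  rw [Finset.mem_range] at hk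
  rcases Nat.eq_zero_or_pos k with hk0 | hk1
  · subst hk0
    have h1 : (p : A) ^ (m + 1) ∣ ((p : A) ^ m * c) ^ p := by
      rw [mul_pow, ← pow_mul]
      exact Dvd.dvd.mul_right (pow_dvd_pow _ (by nlinarith [hp.two_le])) _
    simp only [pow_zero, one_mul, Nat.choose_zero_right, Nat.cast_one, mul_one, Nat.sub_zero]
    exact h1
  · have h1 : (p : A) ^ m ∣ ((p : A) ^ m * c) ^ (p - k) := by
      calc (p : A) ^ m ∣ ((p : A) ^ m * c) ^ 1 := by simpa using Dvd.intro c rfl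
        _ ∣ ((p : A) ^ m * c) ^ (p - k) := pow_dvd_pow _ (by omega)
    have h2 : (p : A) ∣ (p.choose k : A) :=
      Nat.cast_dvd_cast (hp.dvd_choose_self (by omega) hk)
    have h3 := mul_dvd_mul h1 h2
    rw [pow_succ]
    calc (p : A) ^ m * (p : A) ∣ ((p : A) ^ m * c) ^ (p - k) * (p.choose k : A) := h3
      _ ∣ b ^ k * ((p : A) ^ m * c) ^ (p - k) * (p.choose k : A) := by
          rw [mul_assoc]; exact dvd_mul_left _ _

/-- Finite-level factorization lemma: if `p` is a nonzerodivisor of `A`, `φ` is a ring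
automorphism fixing `p`, `φ(t) = t^p`, `x ≡ t (mod p)` and `φ(x) = x^p(1 + p·y)`, then
for every `n`, `x ≡ t·∏_{i=1}^{n} (1 + p·φ^{−i}(y))^{p^{i−1}} (mod p^{n+1})`. -/
theorem stmt4 {A : Type*} [CommRing A] (p : ℕ) (hp : p.Prime)
    (hpnzd : (p : A) ∈ nonZeroDivisors A)
    (φ : A ≃+* A) (hφp : φ (p : A) = (p : A))
    (t x y : A) (ht : φ t = t ^ p)
    (hx : x - t ∈ Ideal.span {(p : A)})
    (hφx : φ x = x ^ p * (1 + (p : A) * y)) :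
    ∀ n : ℕ,
      x - t * ∏ i ∈ Finset.range n, (1 + (p : A) * ((⇑φ.symm)^[i + 1] y)) ^ p ^ i ∈
        Ideal.span {(p : A) ^ (n + 1)} := by
  have hsp : φ.symm (p : A) = (p : A) := by
    conv_lhs => rw [← hφp]
    exact φ.symm_apply_apply _
  intro n
  induction n with
  | zero => simpa using hx
  | succ n ih =>
    rw [Ideal.mem_span_singleton] at ih ⊢
    set u := ∏ i ∈ Finset.range n, (1 + (p : A) * ((⇑φ.symm)^[i + 1] y)) ^ p ^ i with hu
    have hxeq : x = (φ.symm x) ^ p * (1 + (p : A) * φ.symm y) := by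
      have h := congrArg φ.symm hφx
      rw [φ.symm_apply_apply] at h
      rw [map_mul, map_pow, map_add, map_one, map_mul, hsp] at h
      exact h
    obtain ⟨c, hc⟩ := ih
    have hih2 : (p : A) ^ (n + 1) ∣ φ.symm x - φ.symm t * φ.symm u := by
      refine ⟨φ.symm c, ?_⟩
      have h := congrArg φ.symm hc
      rw [map_sub, map_mul, map_mul, map_pow, hsp] at h
      exact h
    have hkey := key_dvd p (n + 1) hp (by omega) _ _ hih2
    have htp : (φ.symm t) ^ p = t := by
      rw [← map_pow, ← ht, φ.symm_apply_apply]
    have hup : (φ.symm u) ^ p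
        = ∏ i ∈ Finset.range n, (1 + (p : A) * ((⇑φ.symm)^[i + 2] y)) ^ p ^ (i + 1) := by
      rw [hu, map_prod, ← Finset.prod_pow]
      apply Finset.prod_congr rfl
      intro i _
      rw [map_pow, map_add, map_one, map_mul, hsp, ← pow_mul, ← pow_succ]
      rw [← Function.iterate_succ_apply' φ.symm (i+1) y]
    have hprod : ∏ i ∈ Finset.range (n + 1), (1 + (p : A) * ((⇑φ.symm)^[i + 1] y)) ^ p ^ i
        = (∏ i ∈ Finset.range n, (1 + (p : A) * ((⇑φ.symm)^[i + 2] y)) ^ p ^ (i + 1))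
          * (1 + (p : A) * φ.symm y) := by
      rw [Finset.prod_range_succ']
      simp
    rw [hprod, hxeq]
    have hfin : (φ.symm x) ^ p * (1 + (p : A) * φ.symm y)
        - t * ((∏ i ∈ Finset.range n, (1 + (p : A) * ((⇑φ.symm)^[i + 2] y)) ^ p ^ (i + 1))
          * (1 + (p : A) * φ.symm y))
        = ((φ.symm x) ^ p - (φ.symm t * φ.symm u) ^ p) * (1 + (p : A) * φ.symm y) := by
      rw [mul_pow, htp, hup]; ring
    rw [hfin]
    exact hkey.mul_right _
end

section
/- Let S be a commutative ring and ρ ∈ S a nonzerodivisor such that the Frobenius map S/ρS → S/ρ^pS sending s mod ρ to s^p mod ρ^p is injective. Then for every y ∈ S and every l ≥ 1, if ρ^{pl} divides y^p in S, then ρ^l divides y. -/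
/-- If `ρ` is a nonzerodivisor of `S` and the Frobenius `S/ρ → S/ρ^p`, `s ↦ s^p`, is
injective, then for all `y ∈ S` and `l ≥ 1`, `ρ^{pl} ∣ y^p` implies `ρ^l ∣ y`. -/
theorem stmt5 {S : Type*} [CommRing S] (p : ℕ) (hp : p.Prime)
    (ρ : S) (hρ : ρ ∈ nonZeroDivisors S)
    (hFrob : ∀ s t : S, ρ ^ p ∣ s ^ p - t ^ p → ρ ∣ s - t) :
    ∀ (y : S) (l : ℕ), 1 ≤ l → ρ ^ (p * l) ∣ y ^ p → ρ ^ l ∣ y := by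
  have base : ∀ y : S, ρ ^ p ∣ y ^ p → ρ ∣ y := by
    intro y h
    have := hFrob y 0 (by simpa [zero_pow hp.ne_zero] using h)
    simpa using this
  intro y l
  induction l generalizing y with
  | zero => intro h; omega
  | succ l ih =>
    intro _ h
    rcases Nat.eq_zero_or_pos l with rfl | hl
    · simpa using base y (by simpa using h)
    · have h1 : ρ ^ (p * l) ∣ y ^ p := dvd_trans (pow_dvd_pow ρ (by nlinarith [hp.two_le])) h
      obtain ⟨z, hz⟩ := ih y hl h1
      have hcancel : ρ ^ p ∣ z ^ p := by
        have hne : ρ ^ (p * l) ∈ nonZeroDivisors S := pow_mem hρ _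
        obtain ⟨w, hw⟩ := h
        refine ⟨w, ?_⟩
        have e1 : ρ ^ (p * l) * z ^ p = y ^ p := by
          rw [hz, mul_pow, ← pow_mul, mul_comm l p]
        have e2 : ρ ^ (p * (l + 1)) * w = ρ ^ (p * l) * (ρ ^ p * w) := by
          rw [mul_add, pow_add]; ring
        exact (mul_cancel_left_mem_nonZeroDivisors hne).mp (e1.trans (hw.trans e2))
      obtain ⟨u, hu⟩ := base z hcancel
      exact ⟨u, by rw [hz, hu, pow_succ]; ring⟩
end
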